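/- Let ψ ∈ Ψ(a,b) (a Grand Lebesgue generating function) and suppose K(p,q) < ∞ for (p,q) in a nonempty set B, with D = {q : ∃p, (p,q) ∈ B} nonempty. Define ζ(q) = inf_{p : (p,q) ∈ B} ψ(p) K(p,q). Then for every f with ‖f‖_{Gψ} < ∞, ‖f̂‖_{Gζ(S^{d-1})} ≤ ‖f‖_{Gψ}, i.e. the restriction Fourier operator has Grand-Lebesgue operator norm at most 1. -/

import Mathlib

open MeasureTheory Real Set

/-- The Fourier transform `f̂(k) = ∫ e^{-i⟨k,x⟩} f(x) dx` on `ℝ^d`. -/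
noncomputable def fourierT (d : ℕ) (f : EuclideanSpace ℝ (Fin d) → ℂ)
    (k : EuclideanSpace ℝ (Fin d)) : ℂ :=
  ∫ x, Complex.exp (-(Complex.I * ((inner ℝ k x : ℝ) : ℂ))) * f x

/-!
For `p` in the range of a Grand Lebesgue norm, `‖f‖_p ≤ ψ(p) ‖f‖_{Gψ}`. Combined with the
restriction inequality this gives `‖f̂‖_q ≤ ψ(p) K(p,q) ‖f‖_{Gψ}` for every `(p,q) ∈ B`, and
taking the infimum over `p` (legitimate since `‖f‖_{Gψ} ≥ 0`) yields the factor `ζ(q)`.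
-/

section GrandNorm

variable {ι : Type*} {N ψ : ι → ℝ} {I : Set ι} {p : ι}

lemma le_mul_csSup_div (hbdd : BddAbove {y | ∃ p ∈ I, y = N p / ψ p}) (hp : p ∈ I)
    (hψ : 0 < ψ p) : N p ≤ ψ p * sSup {y | ∃ p ∈ I, y = N p / ψ p} :=
  (div_le_iff₀' hψ).mp (le_csSup hbdd ⟨p, hp, rfl⟩)

lemma csSup_div_nonneg (hbdd : BddAbove {y | ∃ p ∈ I, y = N p / ψ p}) (hp : p ∈ I)
    (hN : 0 ≤ N p) (hψ : 0 ≤ ψ p) : 0 ≤ sSup {y | ∃ p ∈ I, y = N p / ψ p} :=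
  (div_nonneg hN hψ).trans (le_csSup hbdd ⟨p, hp, rfl⟩)

end GrandNorm

lemma le_csInf_mul_of_forall_le_mul {α : Type*} {P : α → Prop} {c : α → ℝ} {L M : ℝ}
    (hM : 0 ≤ M) (hP : ∃ p, P p) (h : ∀ p, P p → L ≤ c p * M) :
    L ≤ sInf {z | ∃ p, P p ∧ z = c p} * M := by
  obtain ⟨p₀, hp₀⟩ := hP
  rw [mul_comm, ← smul_eq_mul, ← Real.sInf_smul_of_nonneg hM]
  refine le_csInf ⟨M • c p₀, smul_mem_smul_set ⟨p₀, hp₀, rfl⟩⟩ ?_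
  rintro _ ⟨_, ⟨p, hp, rfl⟩, rfl⟩
  simpa only [smul_eq_mul, mul_comm] using h p hp

theorem grand_lebesgue_restriction_general (d : ℕ) (a b : ℝ)
    (ψ : ℝ → ℝ) (hψpos : ∃ ε > 0, ∀ p ∈ Ioo a b, ε ≤ ψ p)
    (B : Set (ℝ × ℝ)) (hB : ∀ pq ∈ B, pq.1 ∈ Ioo a b ∧ 1 ≤ pq.2)
    (K : ℝ → ℝ → ℝ) (hKpos : ∀ pq ∈ B, 0 < K pq.1 pq.2)
    (f : EuclideanSpace ℝ (Fin d) → ℂ)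
    (hrestr : ∀ pq ∈ B,
      (∫ k in Metric.sphere (0 : EuclideanSpace ℝ (Fin d)) 1,
          ‖fourierT d f k‖ ^ pq.2 ∂μH[(d : ℝ) - 1]) ^ (1 / pq.2)
        ≤ K pq.1 pq.2 * (∫ x, ‖f x‖ ^ pq.1) ^ (1 / pq.1))
    (hGbdd : BddAbove { y : ℝ | ∃ p ∈ Ioo a b,
      y = (∫ x, ‖f x‖ ^ p) ^ (1 / p) / ψ p }) :
    ∀ q : ℝ, (∃ p, (p, q) ∈ B) →
      (∫ k in Metric.sphere (0 : EuclideanSpace ℝ (Fin d)) 1,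
          ‖fourierT d f k‖ ^ q ∂μH[(d : ℝ) - 1]) ^ (1 / q)
        ≤ (sInf { z : ℝ | ∃ p, (p, q) ∈ B ∧ z = ψ p * K p q }) *
          sSup { y : ℝ | ∃ p ∈ Ioo a b,
            y = (∫ x, ‖f x‖ ^ p) ^ (1 / p) / ψ p } := by
  rintro q ⟨p₀, hp₀⟩
  obtain ⟨ε, hε, hψε⟩ := hψpos
  have hψ : ∀ p ∈ Ioo a b, 0 < ψ p := fun p hp => hε.trans_le (hψε p hp)
  have hLp_nonneg : ∀ p : ℝ, 0 ≤ (∫ x, ‖f x‖ ^ p) ^ (1 / p) := fun p => by positivity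
  have hG := csSup_div_nonneg hGbdd (hB _ hp₀).1 (hLp_nonneg p₀) (hψ _ (hB _ hp₀).1).le
  refine le_csInf_mul_of_forall_le_mul hG ⟨p₀, hp₀⟩ fun p hpq => ?_
  have hp := (hB _ hpq).1
  calc _ ≤ K p q * (∫ x, ‖f x‖ ^ p) ^ (1 / p) := hrestr _ hpq
    _ ≤ K p q * (ψ p * _) := by
      gcongr
      · exact (hKpos _ hpq).le
      · exact le_mul_csSup_div hGbdd hp (hψ p hp)
    _ = ψ p * K p q * _ := by ring

/-- Grand Lebesgue space bound for the restriction Fourier transform: if the restriction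
inequality `‖f̂‖_{L^q(S^{d-1})} ≤ K(p,q) ‖f‖_{L^p}` holds on a set `B` of pairs `(p,q)`
with `p ∈ (a,b)`, and `ζ(q) = inf_{p : (p,q) ∈ B} ψ(p) K(p,q)`, then for every `q` in
`D = {q : ∃ p, (p,q) ∈ B}` one has `‖f̂‖_{L^q(S^{d-1})} ≤ ζ(q) ‖f‖_{Gψ}`; that is, the
Grand Lebesgue operator norm of the restriction operator is at most `1`. -/
theorem grand_lebesgue_restriction (d : ℕ) (hd : 2 ≤ d) (a b : ℝ) (hab : 1 ≤ a) (hab2 : a < b)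
    (ψ : ℝ → ℝ) (hψpos : ∃ ε > 0, ∀ p ∈ Ioo a b, ε ≤ ψ p)
    (B : Set (ℝ × ℝ)) (hBne : B.Nonempty) (hB : ∀ pq ∈ B, pq.1 ∈ Ioo a b ∧ 1 ≤ pq.2)
    (K : ℝ → ℝ → ℝ) (hKpos : ∀ pq ∈ B, 0 < K pq.1 pq.2)
    (f : EuclideanSpace ℝ (Fin d) → ℂ)
    (hrestr : ∀ pq ∈ B,
      (∫ k in Metric.sphere (0 : EuclideanSpace ℝ (Fin d)) 1,
          ‖fourierT d f k‖ ^ pq.2 ∂μH[(d : ℝ) - 1]) ^ (1 / pq.2)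
        ≤ K pq.1 pq.2 * (∫ x, ‖f x‖ ^ pq.1) ^ (1 / pq.1))
    (hGbdd : BddAbove { y : ℝ | ∃ p ∈ Ioo a b,
      y = (∫ x, ‖f x‖ ^ p) ^ (1 / p) / ψ p }) :
    ∀ q : ℝ, (∃ p, (p, q) ∈ B) →
      (∫ k in Metric.sphere (0 : EuclideanSpace ℝ (Fin d)) 1,
          ‖fourierT d f k‖ ^ q ∂μH[(d : ℝ) - 1]) ^ (1 / q)
        ≤ (sInf { z : ℝ | ∃ p, (p, q) ∈ B ∧ z = ψ p * K p q }) *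
          sSup { y : ℝ | ∃ p ∈ Ioo a b,
            y = (∫ x, ‖f x‖ ^ p) ^ (1 / p) / ψ p } :=
  grand_lebesgue_restriction_general d a b ψ hψpos B hB K hKpos f hrestr hGbdd
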